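/- Suppose \mu is doubling on a geodesic metric measure space X and that there exist constants c, \tau' \geq 1 and \delta > 0 such that the (q,p)-Poincar\'e inequality (\fint_{B(x_0,r)} |u - u_{B(x_0,r)}|^q\,d\mu)^{1/q} \leq c\,r\,(\fint_{B(x_0,\tau' r)} g_u^p\,d\mu)^{1/p} holds for all u \in N^{1,p}(B(x_0,\tau' r)) whenever 0 < r \leq \delta\,\mathrm{diam}(X). Then a (q,p)-Poincar\'e inequality holds for all balls in X, with constants c_P and \tau depending only on c, \tau', \delta and c_\mu. -/

import Mathlib

open MeasureTheory Metric Set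
open scoped ENNReal

/-- `X` is a geodesic space: any two points are joined by an isometric segment. -/
def IsGeodesicSpace (X : Type*) [MetricSpace X] : Prop :=
  ∀ x y : X, ∃ γ : ℝ → X, γ 0 = x ∧ γ (dist x y) = y ∧
    ∀ s ∈ Set.Icc (0:ℝ) (dist x y), ∀ t ∈ Set.Icc (0:ℝ) (dist x y),
      dist (γ s) (γ t) = |s - t|

/-- `g` is an upper gradient of `u`: `g ≥ 0` and along every rectifiable curve
(parametrized by arclength, i.e. `1`-Lipschitz on `[0,ℓ]`) the fundamental
theorem type inequality holds. -/
def IsUpperGradient {X : Type*} [MetricSpace X] (u g : X → ℝ) : Prop :=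
  (∀ x, 0 ≤ g x) ∧
  ∀ (ℓ : ℝ) (γ : ℝ → X), 0 ≤ ℓ → LipschitzOnWith 1 γ (Set.Icc 0 ℓ) →
    |u (γ ℓ) - u (γ 0)| ≤ ∫ t in Set.Icc (0:ℝ) ℓ, g (γ t)

/-- `(⨍_s (f)^e dμ)^{1/e}` as an extended nonnegative real. -/
noncomputable def avgPow {X : Type*} [MeasurableSpace X]
    (μ : MeasureTheory.Measure X) (s : Set X) (f : X → ℝ) (e : ℝ) : ℝ≥0∞ :=
  ((∫⁻ x in s, ENNReal.ofReal (f x) ^ e ∂μ) / μ s) ^ (1 / e)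

/-- The `(q,p)`-Poincaré inequality on the ball `B(x₀,r)` with constants `c_P, τ`,
formulated for every function–upper-gradient pair. -/
def PoincareOn {X : Type*} [MetricSpace X] [MeasurableSpace X]
    (μ : MeasureTheory.Measure X) (p q c_P τ : ℝ) (x₀ : X) (r : ℝ) : Prop :=
  ∀ u g : X → ℝ, IsUpperGradient u g →
    MeasureTheory.IntegrableOn u (ball x₀ (τ * r)) μ →
    avgPow μ (ball x₀ r) (fun x => |u x - ⨍ y in ball x₀ r, u y ∂μ|) q ≤
      ENNReal.ofReal (c_P * r) * avgPow μ (ball x₀ (τ * r)) g p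

/-!
For radii `r ≤ δ diam X` the hypothesis applies directly, and widening the gradient ball
from `τ' r` to `τ r` only costs a power of the doubling constant; this settles unbounded `X`,
and a one-point `X` is trivial. For `d = diam X ∈ (0, ∞)`, `ρ = δ d` and `r > ρ`, the ball of
radius `τ r` is all of `X`. Means of `u` over `ρ/4`-balls with centres at distance `≤ ρ/4` are
both compared with the mean over a `ρ/2`-ball, so they differ by `≲ ρ ‖g‖`; chaining along a
geodesic compares the mean over any `ρ/4`-ball with the one centred at `x₀` in `2 ^ K` such
steps. A maximal `ρ/8`-separated set has disjoint `ρ/16`-balls, hence is finite, and its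
`ρ/4`-balls cover `X` with total measure `≲ μ (B(x₀, r))`; summing the local estimates over
this cover gives the Poincaré inequality on `B(x₀, r)`.
-/

open scoped NNReal

lemma ENNReal.rpow_one_div_le_self {A : ℝ≥0∞} (hA : 1 ≤ A) {e : ℝ} (he : 1 ≤ e) :
    A ^ (1 / e) ≤ A :=
  (ENNReal.rpow_le_rpow_of_exponent_le hA ((div_le_one₀ (by linarith)).2 he)).trans_eq
    (ENNReal.rpow_one A)

section AvgPow

variable {X : Type*} [MeasurableSpace X] {μ : Measure X} {s t : Set X} {e : ℝ}

lemma avgPow_mono_set (f : X → ℝ) (he : 1 ≤ e) (hst : s ⊆ t) {A : ℝ≥0∞} (hA : 1 ≤ A)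
    (hAT : A ≠ ⊤) (hμ : μ t ≤ A * μ s) : avgPow μ s f e ≤ A * avgPow μ t f e := by
  have hA0 : A ≠ 0 := (zero_lt_one.trans_le hA).ne'
  calc avgPow μ s f e
      ≤ (A * ((∫⁻ x in t, ENNReal.ofReal (f x) ^ e ∂μ) / μ t)) ^ (1 / e) := by
        unfold avgPow
        gcongr
        calc (∫⁻ x in s, ENNReal.ofReal (f x) ^ e ∂μ) / μ s
            = (A * ∫⁻ x in s, ENNReal.ofReal (f x) ^ e ∂μ) / (A * μ s) :=
              (ENNReal.mul_div_mul_left _ _ hA0 hAT).symm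
          _ ≤ (A * ∫⁻ x in t, ENNReal.ofReal (f x) ^ e ∂μ) / μ t := by
              gcongr
          _ = A * ((∫⁻ x in t, ENNReal.ofReal (f x) ^ e ∂μ) / μ t) := mul_div_assoc ..
    _ = A ^ (1 / e) * avgPow μ t f e := ENNReal.mul_rpow_of_nonneg _ _ (by positivity)
    _ ≤ A * avgPow μ t f e := by gcongr; exact ENNReal.rpow_one_div_le_self hA he

lemma isProbabilityMeasure_inv_smul_restrict (hs0 : μ s ≠ 0) (hsT : μ s ≠ ⊤) :
    IsProbabilityMeasure ((μ s)⁻¹ • μ.restrict s) :=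
  ⟨by simp [ENNReal.inv_mul_cancel hs0 hsT]⟩

lemma avgPow_abs_eq_eLpNorm (f : X → ℝ) (he : 0 < e) :
    avgPow μ s (fun x => |f x|) e = eLpNorm f (ENNReal.ofReal e) ((μ s)⁻¹ • μ.restrict s) := by
  rw [eLpNorm_eq_lintegral_rpow_enorm_toReal (by simpa using he) ENNReal.ofReal_ne_top,
    ENNReal.toReal_ofReal he.le, lintegral_smul_measure, avgPow, ENNReal.div_eq_inv_mul]
  simp only [smul_eq_mul, Real.enorm_eq_ofReal_abs]

lemma edist_setAverage_le_avgPow (he : 1 ≤ e) (hs0 : μ s ≠ 0) (hsT : μ s ≠ ⊤) {u : X → ℝ}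
    (hu : IntegrableOn u s μ) (a : ℝ) :
    edist (⨍ x in s, u x ∂μ) a ≤ avgPow μ s (fun x => |u x - a|) e := by
  have := isProbabilityMeasure_inv_smul_restrict hs0 hsT
  have hu' : Integrable u ((μ s)⁻¹ • μ.restrict s) := hu.smul_measure (by simpa using hs0)
  have hmean : (⨍ x in s, u x ∂μ) - a = ∫ x, (u x - a) ∂((μ s)⁻¹ • μ.restrict s) := by
    rw [integral_sub hu' (integrable_const a), integral_const]
    simp [average]
  rw [avgPow_abs_eq_eLpNorm (fun x => u x - a) (by linarith), edist_dist, Real.dist_eq,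
    ← Real.enorm_eq_ofReal_abs, hmean]
  calc ‖∫ x, (u x - a) ∂((μ s)⁻¹ • μ.restrict s)‖ₑ
      ≤ eLpNorm (fun x => u x - a) 1 ((μ s)⁻¹ • μ.restrict s) := by
        rw [eLpNorm_one_eq_lintegral_enorm]
        exact enorm_integral_le_lintegral_enorm _
    _ ≤ _ := eLpNorm_le_eLpNorm_of_exponent_le (by simpa using he)
        (hu'.sub (integrable_const a)).aestronglyMeasurable

lemma avgPow_abs_sub_le_add_edist (he : 1 ≤ e) (hs0 : μ s ≠ 0) (hsT : μ s ≠ ⊤) {u : X → ℝ}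
    (hu : AEStronglyMeasurable u (μ.restrict s)) (a b : ℝ) :
    avgPow μ s (fun x => |u x - a|) e ≤ avgPow μ s (fun x => |u x - b|) e + edist b a := by
  have := isProbabilityMeasure_inv_smul_restrict hs0 hsT
  have he0 : 0 < e := by linarith
  rw [avgPow_abs_eq_eLpNorm _ he0, avgPow_abs_eq_eLpNorm _ he0, edist_dist, Real.dist_eq,
    ← Real.enorm_eq_ofReal_abs]
  calc eLpNorm (fun x => u x - a) (ENNReal.ofReal e) ((μ s)⁻¹ • μ.restrict s)
      = eLpNorm ((fun x => u x - b) + fun _ => b - a) (ENNReal.ofReal e)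
          ((μ s)⁻¹ • μ.restrict s) := by congr 1; ext x; simp
    _ ≤ _ := by
        refine (eLpNorm_add_le ?_ aestronglyMeasurable_const (by simpa using he)).trans_eq ?_
        · exact (hu.sub aestronglyMeasurable_const).smul_measure _
        · rw [eLpNorm_const _ (by simpa using he0) (NeZero.ne _)]
          simp

lemma avgPow_abs_sub_setAverage_le (he : 1 ≤ e) (hs0 : μ s ≠ 0) (hsT : μ s ≠ ⊤) {u : X → ℝ}
    (hu : IntegrableOn u s μ) (a : ℝ) :
    avgPow μ s (fun x => |u x - ⨍ y in s, u y ∂μ|) e ≤ 2 * avgPow μ s (fun x => |u x - a|) e :=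
  calc avgPow μ s (fun x => |u x - ⨍ y in s, u y ∂μ|) e
      ≤ avgPow μ s (fun x => |u x - a|) e + edist a (⨍ y in s, u y ∂μ) :=
        avgPow_abs_sub_le_add_edist he hs0 hsT hu.aestronglyMeasurable _ _
    _ ≤ avgPow μ s (fun x => |u x - a|) e + avgPow μ s (fun x => |u x - a|) e := by
        rw [edist_comm]
        gcongr
        exact edist_setAverage_le_avgPow he hs0 hsT hu a
    _ = 2 * avgPow μ s (fun x => |u x - a|) e := (two_mul _).symm

lemma setLIntegral_rpow_le_of_avgPow_le {f : X → ℝ} (he : 0 < e) (hT : μ t ≠ ⊤) {M : ℝ≥0∞}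
    (h : avgPow μ t f e ≤ M) : ∫⁻ x in t, ENNReal.ofReal (f x) ^ e ∂μ ≤ M ^ e * μ t := by
  rcases eq_or_ne (μ t) 0 with h0 | h0
  · simp [Measure.restrict_eq_zero.2 h0]
  calc ∫⁻ x in t, ENNReal.ofReal (f x) ^ e ∂μ
      = avgPow μ t f e ^ e * μ t := by
        rw [avgPow, ← ENNReal.rpow_mul, one_div_mul_cancel he.ne', ENNReal.rpow_one,
          ENNReal.div_mul_cancel h0 hT]
    _ ≤ M ^ e * μ t := by gcongr

lemma avgPow_le_of_subset_biUnion {ι : Type*} (f : X → ℝ) (he : 1 ≤ e) {F : Finset ι}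
    {t : ι → Set X} (hst : s ⊆ ⋃ i ∈ F, t i) (htT : ∀ i ∈ F, μ (t i) ≠ ⊤) {A M : ℝ≥0∞}
    (hA : 1 ≤ A) (hμ : ∑ i ∈ F, μ (t i) ≤ A * μ s) (hM : ∀ i ∈ F, avgPow μ (t i) f e ≤ M) :
    avgPow μ s f e ≤ A * M := by
  have he0 : 0 < e := by linarith
  have hint : ∫⁻ x in s, ENNReal.ofReal (f x) ^ e ∂μ ≤ (A * M ^ e) * μ s :=
    calc ∫⁻ x in s, ENNReal.ofReal (f x) ^ e ∂μ
        ≤ ∫⁻ x in ⋃ i ∈ F, t i, ENNReal.ofReal (f x) ^ e ∂μ := lintegral_mono_set hst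
      _ ≤ ∑ i ∈ F, ∫⁻ x in t i, ENNReal.ofReal (f x) ^ e ∂μ := by
        rw [← Finset.tsum_subtype, ← Finset.set_biUnion_coe, Set.biUnion_eq_iUnion]
        exact lintegral_iUnion_le _ _
      _ ≤ ∑ i ∈ F, M ^ e * μ (t i) := Finset.sum_le_sum fun i hi =>
          setLIntegral_rpow_le_of_avgPow_le he0 (htT i hi) (hM i hi)
      _ ≤ (A * M ^ e) * μ s := by
        rw [← Finset.mul_sum, mul_comm A, mul_assoc]
        gcongr
  calc avgPow μ s f e ≤ (A * M ^ e) ^ (1 / e) := by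
        unfold avgPow
        gcongr
        exact ENNReal.div_le_of_le_mul hint
    _ = A ^ (1 / e) * M := by
        rw [ENNReal.mul_rpow_of_nonneg _ _ (by positivity), ← ENNReal.rpow_mul,
          mul_one_div_cancel he0.ne', ENNReal.rpow_one]
    _ ≤ A * M := by gcongr; exact ENNReal.rpow_one_div_le_self hA he

lemma edist_setAverage_setAverage_le (he : 1 ≤ e) (hst : s ⊆ t) (hs0 : μ s ≠ 0)
    (htT : μ t ≠ ⊤) {A : ℝ≥0∞} (hA : 1 ≤ A) (hAT : A ≠ ⊤) (hμ : μ t ≤ A * μ s) {u : X → ℝ}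
    (hu : IntegrableOn u t μ) :
    edist (⨍ x in s, u x ∂μ) (⨍ x in t, u x ∂μ) ≤
      A * avgPow μ t (fun x => |u x - ⨍ y in t, u y ∂μ|) e :=
  (edist_setAverage_le_avgPow he hs0 (ne_top_of_le_ne_top htT (measure_mono hst))
    (hu.mono_set hst) _).trans (avgPow_mono_set _ he hst hA hAT hμ)

end AvgPow

def IsDoubling {X : Type*} [MetricSpace X] [MeasurableSpace X] (μ : Measure X) (C : ℝ≥0∞) :
    Prop :=
  ∀ (x : X) (r : ℝ), 0 < r → μ (ball x (2 * r)) ≤ C * μ (ball x r)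

section Doubling

variable {X : Type*} [MetricSpace X] [MeasurableSpace X] {μ : Measure X} {C : ℝ≥0∞}

lemma IsDoubling.measure_ball_two_pow_mul_le (h : IsDoubling μ C) (m : ℕ) (x : X) {r : ℝ}
    (hr : 0 < r) : μ (ball x (2 ^ m * r)) ≤ C ^ m * μ (ball x r) := by
  induction m with
  | zero => simp
  | succ m ih =>
    calc μ (ball x (2 ^ (m + 1) * r)) = μ (ball x (2 * (2 ^ m * r))) := by ring_nf
      _ ≤ C * μ (ball x (2 ^ m * r)) := h x _ (by positivity)
      _ ≤ C * (C ^ m * μ (ball x r)) := by gcongr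
      _ = C ^ (m + 1) * μ (ball x r) := by ring

lemma IsDoubling.measure_ball_le (h : IsDoubling μ C) {m : ℕ} (x : X) {r s : ℝ} (hr : 0 < r)
    (hs : s ≤ 2 ^ m * r) : μ (ball x s) ≤ C ^ m * μ (ball x r) :=
  (measure_mono (ball_subset_ball hs)).trans (h.measure_ball_two_pow_mul_le m x hr)

lemma IsDoubling.measure_univ_le (h : IsDoubling μ C) {m : ℕ} {x : X} {r : ℝ} (hr : 0 < r)
    (hX : ∀ y, dist y x < 2 ^ m * r) : μ univ ≤ C ^ m * μ (ball x r) := by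
  rw [← eq_univ_of_forall hX]
  exact h.measure_ball_two_pow_mul_le m x hr

end Doubling

lemma IsGeodesicSpace.edist_le_nat_mul {X Y : Type*} [MetricSpace X] [PseudoEMetricSpace Y]
    (hX : IsGeodesicSpace X) {f : X → Y} {ε : ℝ} {S : ℝ≥0∞}
    (hf : ∀ y z, dist y z ≤ ε → edist (f y) (f z) ≤ S) (n : ℕ) {x y : X}
    (hxy : dist x y ≤ n * ε) : edist (f x) (f y) ≤ n * S := by
  induction n generalizing y with
  | zero => simp [dist_le_zero.1 (by simpa using hxy)]
  | succ n ih =>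
    rcases le_or_gt (dist x y) ε with hε | hε
    · calc edist (f x) (f y) ≤ S := hf x y hε
        _ ≤ (n + 1 : ℕ) * S := le_mul_of_one_le_left' (by exact_mod_cast n.succ_pos)
    -- step back from `y` towards `x` along a geodesic by exactly `ε`
    obtain ⟨γ, hγ0, hγ1, hγ⟩ := hX x y
    have hε0 : 0 ≤ ε := by
      push_cast at hxy
      nlinarith [dist_nonneg (x := x) (y := y)]
    have hmem : dist x y - ε ∈ Icc 0 (dist x y) := ⟨by linarith, by linarith⟩
    have hend : dist x y ∈ Icc 0 (dist x y) := ⟨dist_nonneg, le_rfl⟩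
    have hzero : (0 : ℝ) ∈ Icc 0 (dist x y) := ⟨le_rfl, dist_nonneg⟩
    set w := γ (dist x y - ε)
    have hxw : dist x w ≤ n * ε := by
      rw [← hγ0, hγ 0 hzero _ hmem]
      push_cast at hxy
      rw [abs_of_nonpos (by linarith)]
      linarith
    have hwy : dist w y ≤ ε := by
      rw [← hγ1, hγ _ hmem _ hend]
      simp [abs_of_nonneg hε0]
    calc edist (f x) (f y) ≤ edist (f x) (f w) + edist (f w) (f y) := edist_triangle _ _ _
      _ ≤ n * S + S := add_le_add (ih hxw) (hf w y hwy)
      _ = (n + 1 : ℕ) * S := by push_cast; ring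

section Net

variable {X : Type*} [MetricSpace X] [MeasurableSpace X] [OpensMeasurableSpace X]
  {μ : Measure X}

lemma Metric.IsSeparated.sum_measure_ball_le {ε : ℝ≥0} {G : Finset X}
    (hG : IsSeparated (2 * ε : ℝ≥0) (G : Set X)) : ∑ z ∈ G, μ (ball z ε) ≤ μ univ := by
  refine sum_measure_le_measure_univ (fun z _ => measurableSet_ball.nullMeasurableSet) ?_
  intro y hy z hz hyz
  refine (ball_disjoint_ball ?_).aedisjoint
  have h : 2 * ε < nndist y z := by
    have : ((2 * ε : ℝ≥0) : ℝ≥0∞) < edist y z := hG hy hz hyz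
    rwa [edist_nndist, ENNReal.coe_lt_coe] at this
  have h' : (2 * ε : ℝ) < dist y z := by rw [← coe_nndist]; exact_mod_cast h
  linarith

lemma exists_finset_subset_iUnion_closedBall [IsFiniteMeasure μ] {ε : ℝ≥0} {b : ℝ≥0∞}
    (hb : b ≠ 0) (hball : ∀ z, b ≤ μ (ball z ε)) :
    ∃ F : Finset X, univ ⊆ ⋃ z ∈ F, closedBall z (2 * ε) ∧ ∑ z ∈ F, μ (ball z ε) ≤ μ univ := by
  obtain ⟨N, hN⟩ := ENNReal.exists_nat_mul_gt hb (measure_ne_top μ univ)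
  have hcard : ∀ C : Set X, IsSeparated (2 * ε : ℝ≥0) C → C.encard ≤ N := by
    intro C hC
    by_contra! hlt
    obtain ⟨t, htC, ht⟩ := exists_subset_encard_eq hlt.le
    obtain ⟨G, rfl⟩ := (finite_of_encard_eq_coe ht).exists_finset_coe
    rw [encard_coe_eq_coe_finsetCard, Nat.cast_inj] at ht
    have := (hC.subset htC).sum_measure_ball_le (μ := μ)
    have := (Finset.card_nsmul_le_sum G _ b fun z _ => hball z).trans this
    rw [ht, nsmul_eq_mul] at this
    exact hN.not_ge this
  have hpack : Metric.packingNumber (2 * ε) (univ : Set X) ≠ ⊤ :=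
    ne_top_of_le_ne_top (ENat.natCast_ne_top N) (iSup₂_le fun C _ => iSup_le (hcard C))
  obtain ⟨F, hF⟩ := (encard_ne_top_iff.1 <|
    (encard_maximalSeparatedSet hpack).trans_ne hpack).exists_finset_coe
  refine ⟨F, ?_, ?_⟩
  · have := (isCover_maximalSeparatedSet hpack).subset_iUnion_closedBall
    rw [← hF] at this
    simpa using this
  · have := isSeparated_maximalSeparatedSet (ε := 2 * ε) (A := (univ : Set X))
    rw [← hF] at this
    exact this.sum_measure_ball_le

end Net

section LocalToGlobal

variable {X : Type*} [MetricSpace X] [MeasurableSpace X]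
  {μ : Measure X} [IsFiniteMeasure μ] [μ.IsOpenPosMeasure] {C : ℝ≥0∞} {ρ q : ℝ} {u : X → ℝ}
  {W : ℝ≥0∞}

lemma edist_setAverage_ball_le (hdbl : IsDoubling μ C) (hC : 1 ≤ C) (hCT : C ≠ ⊤) (hq : 1 ≤ q)
    (hρ : 0 < ρ) (hu : Integrable u μ) {y z : X}
    (hW : avgPow μ (ball y (ρ / 2)) (fun x => |u x - ⨍ w in ball y (ρ / 2), u w ∂μ|) q ≤ W)
    (hyz : dist y z ≤ ρ / 4) :
    edist (⨍ x in ball y (ρ / 4), u x ∂μ) (⨍ x in ball z (ρ / 4), u x ∂μ) ≤ 2 * C ^ 2 * W := by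
  have hnear : ∀ w, dist w y ≤ ρ / 4 →
      edist (⨍ x in ball w (ρ / 4), u x ∂μ) (⨍ x in ball y (ρ / 2), u x ∂μ) ≤ C ^ 2 * W := by
    intro w hw
    have hμ : μ (ball y (ρ / 2)) ≤ C ^ 2 * μ (ball w (ρ / 4)) :=
      (measure_mono (ball_subset_ball' (by rw [dist_comm]; linarith))).trans
        (hdbl.measure_ball_two_pow_mul_le 2 w (by positivity))
    refine (edist_setAverage_setAverage_le hq (ball_subset_ball' (by linarith))
      (measure_ball_pos μ w (by positivity)).ne' (measure_ne_top μ _) (one_le_pow₀ hC)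
      (ENNReal.pow_ne_top hCT) hμ hu.integrableOn).trans ?_
    gcongr
  calc edist (⨍ x in ball y (ρ / 4), u x ∂μ) (⨍ x in ball z (ρ / 4), u x ∂μ)
      ≤ edist (⨍ x in ball y (ρ / 4), u x ∂μ) (⨍ x in ball y (ρ / 2), u x ∂μ) +
          edist (⨍ x in ball z (ρ / 4), u x ∂μ) (⨍ x in ball y (ρ / 2), u x ∂μ) :=
        edist_triangle_right _ _ _
    _ ≤ C ^ 2 * W + C ^ 2 * W :=
        add_le_add (hnear y (by rw [dist_self]; positivity)) (hnear z (by rwa [dist_comm]))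
    _ = 2 * C ^ 2 * W := by ring

theorem avgPow_abs_sub_setAverage_ball_le_of_local [OpensMeasurableSpace X]
    (hgeo : IsGeodesicSpace X) (hdbl : IsDoubling μ C) (hC : 1 ≤ C) (hCT : C ≠ ⊤) (hq : 1 ≤ q)
    (hρ : 0 < ρ) {K : ℕ} (hK : ∀ y z : X, dist y z < 2 ^ K * (ρ / 16)) (hu : Integrable u μ)
    (hloc : ∀ y, ∀ s ∈ ({ρ / 4, ρ / 2} : Set ℝ),
      avgPow μ (ball y s) (fun x => |u x - ⨍ w in ball y s, u w ∂μ|) q ≤ W)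
    (x₀ : X) {r : ℝ} (hr : ρ / 16 ≤ r) :
    avgPow μ (ball x₀ r) (fun x => |u x - ⨍ w in ball x₀ r, u w ∂μ|) q ≤
      2 * (C ^ (K + 2) * ((1 + 2 ^ K * (2 * C ^ 2)) * W)) := by
  set a : X → ℝ := fun z => ⨍ x in ball z (ρ / 4), u x ∂μ
  have hchain : ∀ z, edist (a z) (a x₀) ≤ 2 ^ K * (2 * C ^ 2 * W) := fun z => by
    have hz : dist z x₀ ≤ (2 ^ K : ℕ) * (ρ / 4) := by
      have := hK z x₀
      push_cast
      nlinarith [pow_pos (two_pos (α := ℝ)) K]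
    simpa using hgeo.edist_le_nat_mul
      (fun y z h => edist_setAverage_ball_le hdbl hC hCT hq hρ hu (hloc y _ (by simp)) h) _ hz
  have hnear : ∀ z, avgPow μ (ball z (ρ / 4)) (fun x => |u x - a x₀|) q ≤
      (1 + 2 ^ K * (2 * C ^ 2)) * W := fun z =>
    calc avgPow μ (ball z (ρ / 4)) (fun x => |u x - a x₀|) q
        ≤ avgPow μ (ball z (ρ / 4)) (fun x => |u x - a z|) q + edist (a z) (a x₀) :=
          avgPow_abs_sub_le_add_edist hq (measure_ball_pos μ z (by positivity)).ne'
            (measure_ne_top μ _) hu.aestronglyMeasurable.restrict _ _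
      _ ≤ W + 2 ^ K * (2 * C ^ 2 * W) := add_le_add (hloc z _ (by simp)) (hchain z)
      _ = (1 + 2 ^ K * (2 * C ^ 2)) * W := by ring
  have hglobal : ∀ z, ∀ s ≥ ρ / 16, μ univ ≤ C ^ K * μ (ball z s) := fun z s hs =>
    hdbl.measure_univ_le (lt_of_lt_of_le (by positivity) hs) fun y =>
      (hK y z).trans_le (by gcongr)
  obtain ⟨F, hFcover, hFsum⟩ := exists_finset_subset_iUnion_closedBall (μ := μ)
    (ε := ⟨ρ / 16, by positivity⟩) (b := μ univ / C ^ K)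
    (ENNReal.div_ne_zero.2 ⟨isOpen_univ.measure_ne_zero μ ⟨x₀, trivial⟩,
      ENNReal.pow_ne_top hCT⟩)
    (fun z => ENNReal.div_le_of_le_mul' (hglobal z _ le_rfl))
  have hcover : ball x₀ r ⊆ ⋃ z ∈ F, ball z (ρ / 4) := fun x _ => by
    have := hFcover (mem_univ x)
    simp only [mem_iUnion] at this ⊢
    obtain ⟨z, hz, hxz⟩ := this
    exact ⟨z, hz, closedBall_subset_ball (by change 2 * (ρ / 16) < ρ / 4; linarith) hxz⟩
  have hμF : ∑ z ∈ F, μ (ball z (ρ / 4)) ≤ C ^ (K + 2) * μ (ball x₀ r) :=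
    calc ∑ z ∈ F, μ (ball z (ρ / 4))
        ≤ ∑ z ∈ F, C ^ 2 * μ (ball z (ρ / 16)) := Finset.sum_le_sum fun z _ =>
          hdbl.measure_ball_le z (by positivity) (by linarith)
      _ ≤ C ^ 2 * (C ^ K * μ (ball x₀ r)) := by
          rw [← Finset.mul_sum]
          gcongr
          exact hFsum.trans (hglobal x₀ r hr)
      _ = C ^ (K + 2) * μ (ball x₀ r) := by ring
  calc avgPow μ (ball x₀ r) (fun x => |u x - ⨍ w in ball x₀ r, u w ∂μ|) q
      ≤ 2 * avgPow μ (ball x₀ r) (fun x => |u x - a x₀|) q :=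
        avgPow_abs_sub_setAverage_le hq (measure_ball_pos μ x₀ (by linarith)).ne'
          (measure_ne_top μ _) hu.integrableOn _
    _ ≤ 2 * (C ^ (K + 2) * ((1 + 2 ^ K * (2 * C ^ 2)) * W)) := by
        gcongr
        exact avgPow_le_of_subset_biUnion _ hq hcover (fun _ _ => measure_ne_top μ _)
          (one_le_pow₀ hC) hμF fun z _ => hnear z

end LocalToGlobal

section Poincare

variable {X : Type*} [MetricSpace X] [MeasurableSpace X] {μ : Measure X} {p q c τ τ' : ℝ}
  {x : X} {r : ℝ}

lemma PoincareOn.mono_const {c' : ℝ} (h : PoincareOn μ p q c τ x r) (hcc' : c ≤ c')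
    (hr : 0 ≤ r) : PoincareOn μ p q c' τ x r := fun u g hg hu =>
  (h u g hg hu).trans (by gcongr)

lemma PoincareOn.of_subsingleton [Subsingleton X] (hq : 0 < q) (hx0 : μ (ball x r) ≠ 0)
    (hxT : μ (ball x r) ≠ ⊤) : PoincareOn μ p q c τ x r := by
  intro u g _ _
  have hu : ∀ y, u y = u x := fun y => congrArg u (Subsingleton.elim y x)
  have hlhs : avgPow μ (ball x r) (fun y => |u y - ⨍ w in ball x r, u w ∂μ|) q = 0 := by
    simp [avgPow, hu, setAverage_const hx0 hxT, ENNReal.zero_rpow_of_pos hq, hq]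
  exact hlhs ▸ zero_le

lemma PoincareOn.mono_dilation (h : PoincareOn μ p q c τ' x r) (hp : 1 ≤ p) (hr : 0 ≤ r)
    (hτ : τ' ≤ τ) {A : ℝ≥0} (hA : 1 ≤ A)
    (hμ : μ (ball x (τ * r)) ≤ A * μ (ball x (τ' * r))) : PoincareOn μ p q (c * A) τ x r := by
  intro u g hg hu
  calc avgPow μ (ball x r) (fun y => |u y - ⨍ w in ball x r, u w ∂μ|) q
      ≤ ENNReal.ofReal (c * r) * avgPow μ (ball x (τ' * r)) g p :=
        h u g hg (hu.mono_set (ball_subset_ball (by gcongr)))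
    _ ≤ ENNReal.ofReal (c * r) * (A * avgPow μ (ball x (τ * r)) g p) := by
        gcongr
        exact avgPow_mono_set g hp (ball_subset_ball (by gcongr)) (by exact_mod_cast hA)
          ENNReal.coe_ne_top hμ
    _ = ENNReal.ofReal (c * A * r) * avgPow μ (ball x (τ * r)) g p := by
        rw [mul_right_comm, ENNReal.ofReal_mul' A.coe_nonneg, ENNReal.ofReal_coe_nnreal,
          mul_assoc]

end Poincare

section BoundedSpace

variable {X : Type*} [MetricSpace X] [MeasurableSpace X] [OpensMeasurableSpace X]
  {μ : Measure X} [IsFiniteMeasure μ] [μ.IsOpenPosMeasure] {C : ℝ≥0} {p q c τ τ' ρ : ℝ}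

/-- `2` comes from replacing the mean over the ball by a fixed value, `C ^ (K + 2)` from the
overlap of the covering balls, and `1 + 2 ^ K * (2 * C ^ 2)` from one local estimate plus
`2 ^ K` chaining steps. -/
def localToGlobalConst (C : ℝ≥0) (K : ℕ) : ℝ≥0 :=
  2 * (C ^ (K + 2) * (1 + 2 ^ K * (2 * C ^ 2)))

lemma poincareOn_of_ball_eq_univ (hgeo : IsGeodesicSpace X) (hdbl : IsDoubling μ C)
    (hC : 1 ≤ C) (hp : 1 ≤ p) (hq : 1 ≤ q) (hc : 0 ≤ c) (hτ' : 1 ≤ τ') (hρ : 0 < ρ) {K : ℕ}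
    (hK : ∀ y z : X, dist y z < 2 ^ K * (ρ / 16))
    (hsmall : ∀ (y : X) (s : ℝ), 0 < s → s ≤ ρ → PoincareOn μ p q c τ' y s)
    {x₀ : X} {r : ℝ} (hρr : ρ ≤ r) (hball : ball x₀ (τ * r) = univ) :
    PoincareOn μ p q (c * (C ^ K * localToGlobalConst C K)) τ x₀ r := by
  intro u g hg hu
  rw [hball, integrableOn_univ] at hu
  rw [hball]
  have hCE : (1 : ℝ≥0∞) ≤ C := by exact_mod_cast hC
  set E := avgPow μ univ g p
  have hloc : ∀ y, ∀ s ∈ ({ρ / 4, ρ / 2} : Set ℝ),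
      avgPow μ (ball y s) (fun x => |u x - ⨍ w in ball y s, u w ∂μ|) q ≤
        ENNReal.ofReal (c * ρ) * (C ^ K * E) := by
    intro y s hs
    have hs' : ρ / 4 ≤ s ∧ s ≤ ρ / 2 := by
      rcases hs with rfl | rfl <;> constructor <;> linarith
    have hs0 : 0 < s := by linarith
    calc avgPow μ (ball y s) (fun x => |u x - ⨍ w in ball y s, u w ∂μ|) q
        ≤ ENNReal.ofReal (c * s) * avgPow μ (ball y (τ' * s)) g p :=
          hsmall y s hs0 (by linarith) u g hg hu.integrableOn
      _ ≤ ENNReal.ofReal (c * ρ) * (C ^ K * E) := by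
          gcongr
          · linarith
          refine avgPow_mono_set g hp (subset_univ _) (one_le_pow₀ hCE) (by simp)
            (hdbl.measure_univ_le (by positivity) fun z => (hK z y).trans_le ?_)
          gcongr
          nlinarith
  calc avgPow μ (ball x₀ r) (fun x => |u x - ⨍ w in ball x₀ r, u w ∂μ|) q
      ≤ 2 * ((C : ℝ≥0∞) ^ (K + 2) * ((1 + 2 ^ K * (2 * (C : ℝ≥0∞) ^ 2)) *
          (ENNReal.ofReal (c * ρ) * (C ^ K * E)))) :=
        avgPow_abs_sub_setAverage_ball_le_of_local hgeo hdbl hCE ENNReal.coe_ne_top hq hρ hK hu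
          hloc x₀ (by linarith)
    _ = ENNReal.ofReal (c * ρ) * ↑(C ^ K * localToGlobalConst C K) * E := by
        simp only [localToGlobalConst]
        push_cast
        ring
    _ ≤ ENNReal.ofReal (c * (C ^ K * localToGlobalConst C K) * r) * E := by
        rw [← NNReal.coe_pow, ← NNReal.coe_mul, mul_right_comm c,
          ENNReal.ofReal_mul' (NNReal.coe_nonneg _), ENNReal.ofReal_coe_nnreal]
        gcongr

theorem exists_poincareOn_of_bounded (hgeo : IsGeodesicSpace X) (hdbl : IsDoubling μ C)
    (hC : 1 ≤ C) (hp : 1 ≤ p) (hq : 1 ≤ q) (hc : 0 < c) (hτ' : 1 ≤ τ') {δ d : ℝ} (hδ : 0 < δ)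
    (hd : 0 < d) (hdist : ∀ y z : X, dist y z ≤ d)
    (hsmall : ∀ (x₀ : X) (r : ℝ), 0 < r → r ≤ δ * d → PoincareOn μ p q c τ' x₀ r) :
    ∃ c_P > (0 : ℝ), ∃ τ ≥ (1 : ℝ), ∀ (x₀ : X) (r : ℝ), 0 < r →
      PoincareOn μ p q c_P τ x₀ r := by
  obtain ⟨K, hK⟩ : ∃ K : ℕ, 16 / δ + 1 < 2 ^ K := pow_unbounded_of_one_lt _ one_lt_two
  have hδK : 16 < 2 ^ K * δ := by
    have := (div_lt_iff₀ hδ).1 (show 16 / δ < 2 ^ K by linarith)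
    linarith
  have hL : (1 : ℝ≥0) ≤ localToGlobalConst C K := by
    unfold localToGlobalConst
    have : (1 : ℝ≥0) ≤ C ^ (K + 2) * (1 + 2 ^ K * (2 * C ^ 2)) :=
      one_le_mul (one_le_pow₀ hC) le_self_add
    calc (1 : ℝ≥0) ≤ 1 * 1 := by norm_num
      _ ≤ 2 * _ := mul_le_mul' one_le_two this
  refine ⟨c * (C ^ K * localToGlobalConst C K), by positivity, τ' + 1 / δ,
    by simp only [ge_iff_le]; linarith [one_div_pos.2 hδ], fun x₀ r hr => ?_⟩
  rcases le_or_gt r (δ * d) with hrρ | hρr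
  · refine ((hsmall x₀ r hr hrρ).mono_dilation hp hr.le (by linarith [one_div_pos.2 hδ])
      (one_le_pow₀ (n := K) hC) ?_).mono_const ?_ hr.le
    · push_cast
      refine hdbl.measure_ball_le x₀ (by positivity) ?_
      have hinvδ : 1 / δ ≤ 16 / δ := by gcongr; norm_num
      have hτK : τ' + 1 / δ ≤ 2 ^ K * τ' :=
        calc τ' + 1 / δ ≤ (16 / δ + 1) * τ' := by nlinarith [one_div_pos.2 hδ]
          _ ≤ 2 ^ K * τ' := by gcongr
      rw [← mul_assoc]
      gcongr
    · push_cast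
      gcongr
      exact le_mul_of_one_le_right (by positivity) (by exact_mod_cast hL)
  · refine poincareOn_of_ball_eq_univ hgeo hdbl hC hp hq hc.le hτ' (mul_pos hδ hd)
      (fun y z => (hdist y z).trans_lt (by nlinarith)) (fun y s hs hsρ => hsmall y s hs hsρ)
      hρr.le (eq_univ_of_forall fun y => mem_ball.2 ((hdist y x₀).trans_lt ?_))
    have : d < 1 / δ * r := by rw [div_mul_eq_mul_div, one_mul, lt_div_iff₀ hδ]; linarith
    nlinarith

end BoundedSpace

theorem poincare_small_balls_implies_poincare_general
    {X : Type*} [MetricSpace X] [MeasurableSpace X] [BorelSpace X]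
    (hgeo : IsGeodesicSpace X)
    (μ : Measure X) (c_μ : ℝ) (hc : 1 ≤ c_μ)
    (hnt : ∀ (x : X) (r : ℝ), 0 < r → 0 < μ (ball x r) ∧ μ (ball x r) < ⊤)
    (hdbl : ∀ (x : X) (r : ℝ), 0 < r →
      μ (ball x (2 * r)) ≤ ENNReal.ofReal c_μ * μ (ball x r))
    (p q : ℝ) (hp : 1 ≤ p) (hq : 1 ≤ q)
    (c τ' δ : ℝ) (hcpos : 0 < c) (hτ' : 1 ≤ τ') (hδ : 0 < δ)
    (hsmall : ∀ (x₀ : X) (r : ℝ), 0 < r →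
      ENNReal.ofReal r ≤ ENNReal.ofReal δ * EMetric.diam (univ : Set X) →
      PoincareOn μ p q c τ' x₀ r) :
    ∃ c_P > (0:ℝ), ∃ τ ≥ (1:ℝ), ∀ (x₀ : X) (r : ℝ), 0 < r →
      PoincareOn μ p q c_P τ x₀ r := by
  change ∀ x₀ r, 0 < r → ENNReal.ofReal r ≤ ENNReal.ofReal δ * ediam univ → _ at hsmall
  rcases eq_or_ne (ediam (univ : Set X)) ⊤ with hinf | hfin
  · refine ⟨c, hcpos, τ', hτ', fun x₀ r hr => hsmall x₀ r hr ?_⟩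
    simp [hinf, ENNReal.mul_top, hδ]
  rcases eq_or_ne (ediam (univ : Set X)) 0 with hzero | hpos
  · have : Subsingleton X := subsingleton_univ_iff.1 (ediam_eq_zero_iff.1 hzero)
    exact ⟨1, one_pos, 1, le_rfl, fun x₀ r hr =>
      .of_subsingleton (by linarith) (hnt x₀ r hr).1.ne' (hnt x₀ r hr).2.ne⟩
  have hdist : ∀ y z : X, dist y z ≤ diam univ := fun y z =>
    dist_le_diam_of_mem' hfin trivial trivial
  obtain ⟨x₀, -⟩ := (not_subsingleton_iff.1 (ediam_eq_zero_iff.not.1 hpos)).nonempty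
  have : IsFiniteMeasure μ := ⟨by
    rw [← eq_univ_of_forall fun y => mem_ball.2 ((hdist y x₀).trans_lt (lt_add_one _))]
    exact (hnt x₀ _ (by positivity)).2⟩
  have : μ.IsOpenPosMeasure := ⟨fun U hU ⟨x, hx⟩ => by
    obtain ⟨ε, hε, hsub⟩ := Metric.isOpen_iff.1 hU x hx
    exact ((hnt x ε hε).1.trans_le (measure_mono hsub)).ne'⟩
  refine exists_poincareOn_of_bounded hgeo (C := c_μ.toNNReal) hdbl
    (Real.one_le_toNNReal.2 hc) hp hq hcpos hτ' hδ (ENNReal.toReal_pos hpos hfin) hdist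
    fun x₀ r hr hrd => hsmall x₀ r hr ?_
  rw [← ENNReal.ofReal_toReal hfin, ← ENNReal.ofReal_mul hδ.le]
  exact ENNReal.ofReal_le_ofReal hrd

/-- if `μ` is doubling on a complete geodesic space and a `(q,p)`-Poincaré
inequality holds for all balls of radius `≤ δ diam X`, then a `(q,p)`-Poincaré inequality
holds for all balls. -/
theorem poincare_small_balls_implies_poincare
    {X : Type*} [MetricSpace X] [CompleteSpace X] [MeasurableSpace X] [BorelSpace X]
    (hgeo : IsGeodesicSpace X)
    (μ : Measure X) (c_μ : ℝ) (hc : 1 ≤ c_μ)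
    (hnt : ∀ (x : X) (r : ℝ), 0 < r → 0 < μ (ball x r) ∧ μ (ball x r) < ⊤)
    (hdbl : ∀ (x : X) (r : ℝ), 0 < r →
      μ (ball x (2 * r)) ≤ ENNReal.ofReal c_μ * μ (ball x r))
    (p q : ℝ) (hp : 1 ≤ p) (hq : 1 ≤ q)
    (c τ' δ : ℝ) (hcpos : 0 < c) (hτ' : 1 ≤ τ') (hδ : 0 < δ)
    (hsmall : ∀ (x₀ : X) (r : ℝ), 0 < r →
      ENNReal.ofReal r ≤ ENNReal.ofReal δ * EMetric.diam (univ : Set X) →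
      PoincareOn μ p q c τ' x₀ r) :
    ∃ c_P > (0:ℝ), ∃ τ ≥ (1:ℝ), ∀ (x₀ : X) (r : ℝ), 0 < r →
      PoincareOn μ p q c_P τ x₀ r :=
  poincare_small_balls_implies_poincare_general hgeo μ c_μ hc hnt hdbl p q hp hq c τ' δ hcpos hτ' hδ
    hsmall
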